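/- Let ρ1 ∈ D_{n1} and ρ2 ∈ D_{n2} be density matrices. For every integer k with max{rank(ρ1), rank(ρ2)} ≤ k ≤ rank(ρ1)·rank(ρ2), there exists ρ ∈ S(ρ1,ρ2) with rank(ρ) = k. -/

import Mathlib

open Matrix Kronecker Finset
open scoped ComplexOrder

/-- Partial trace over the first subsystem: `tr_1(ρ) = Σ_j ρ_{jj} ∈ M_{n2}`. -/
noncomputable def trace1 {n1 n2 : ℕ} (ρ : Matrix (Fin n1 × Fin n2) (Fin n1 × Fin n2) ℂ) :
    Matrix (Fin n2) (Fin n2) ℂ :=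
  Matrix.of fun i j => ∑ k : Fin n1, ρ (k, i) (k, j)

/-- Partial trace over the second subsystem: `tr_2(ρ) = (tr ρ_{ij})_{ij} ∈ M_{n1}`. -/
noncomputable def trace2 {n1 n2 : ℕ} (ρ : Matrix (Fin n1 × Fin n2) (Fin n1 × Fin n2) ℂ) :
    Matrix (Fin n1) (Fin n1) ℂ :=
  Matrix.of fun i j => ∑ k : Fin n2, ρ (i, k) (j, k)

/-!
Diagonalise `ρ1 = U diag(p) Uᴴ` and `ρ2 = V diag(q) Vᴴ`. Conjugation by `U ⊗ V` acts on the
partial traces by conjugation with `U` and `V`, so it suffices to realise the marginals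
`diag p` and `diag q`. Partition the `r1 × r2` grid of cells `(i, j)` with `p i * q j ≠ 0` into
`k` classes, none containing two cells of the same row or column (non-attacking rooks): the
`max r1 r2` broken diagonals `i + j mod max r1 r2` do this, and splitting one cell off a class
adds a class. The vectors `∑_{(i,j) in a class} √(p i q j) eᵢ ⊗ eⱼ` are then nonzero and
pairwise orthogonal, so the sum of their rank-one projections has rank `k`; since a class meets
each row and each column at most once, its partial traces are `diag p` and `diag q`.
-/

section PartialTrace

variable {n1 n2 : ℕ}

theorem trace1_eq_trace2_submatrix_swap (ρ : Matrix (Fin n1 × Fin n2) (Fin n1 × Fin n2) ℂ) :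
    trace1 ρ = trace2 (ρ.submatrix Prod.swap Prod.swap) :=
  rfl

theorem trace_trace2 (ρ : Matrix (Fin n1 × Fin n2) (Fin n1 × Fin n2) ℂ) :
    (trace2 ρ).trace = ρ.trace := by
  simp only [Matrix.trace, trace2, diag_apply, of_apply, Fintype.sum_prod_type]

theorem trace2_kronecker_mul_mul (U : Matrix (Fin n1) (Fin n1) ℂ)
    {V : Matrix (Fin n2) (Fin n2) ℂ} (hV : Vᴴ * V = 1)
    (σ : Matrix (Fin n1 × Fin n2) (Fin n1 × Fin n2) ℂ) :
    trace2 ((U ⊗ₖ V) * σ * (U ⊗ₖ V)ᴴ) = U * trace2 σ * Uᴴ := by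
  have hV' : ∀ j j', ∑ b, V b j * star (V b j') = if j' = j then 1 else 0 := fun j j' => by
    simpa only [mul_apply, conjTranspose_apply, one_apply, mul_comm] using
      congrFun (congrFun hV j') j
  ext a a'
  simp only [trace2, mul_apply, of_apply, kroneckerMap_apply, conjTranspose_apply,
    Fintype.sum_prod_type, Finset.sum_mul, Finset.mul_sum, star_mul']
  calc _ = ∑ i', ∑ j', ∑ i, ∑ j, U a i * σ (i, j) (i', j') * star (U a' i') *
          ∑ b, V b j * star (V b j') := by
        simp only [Finset.mul_sum]
        rw [Finset.sum_comm]
        refine Finset.sum_congr rfl fun i' _ => ?_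
        rw [Finset.sum_comm]
        refine Finset.sum_congr rfl fun j' _ => ?_
        rw [Finset.sum_comm]
        refine Finset.sum_congr rfl fun i _ => ?_
        rw [Finset.sum_comm]
        exact Finset.sum_congr rfl fun j _ => Finset.sum_congr rfl fun b _ => by ring
    _ = _ := by
        simp only [hV', mul_ite, mul_one, mul_zero, Finset.sum_ite_eq, Finset.mem_univ, if_true]
        exact Finset.sum_congr rfl fun _ _ => Finset.sum_comm

theorem trace1_kronecker_mul_mul {U : Matrix (Fin n1) (Fin n1) ℂ} (hU : Uᴴ * U = 1)
    (V : Matrix (Fin n2) (Fin n2) ℂ) (σ : Matrix (Fin n1 × Fin n2) (Fin n1 × Fin n2) ℂ) :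
    trace1 ((U ⊗ₖ V) * σ * (U ⊗ₖ V)ᴴ) = V * trace1 σ * Vᴴ := by
  have hswap : (U ⊗ₖ V).submatrix Prod.swap Prod.swap = V ⊗ₖ U := by
    ext x y
    simp [mul_comm]
  rw [trace1_eq_trace2_submatrix_swap, trace1_eq_trace2_submatrix_swap,
    ← trace2_kronecker_mul_mul V hU, ← hswap]
  rw [submatrix_mul _ _ _ _ _ Prod.swap_bijective, submatrix_mul _ _ _ _ _ Prod.swap_bijective,
    conjTranspose_submatrix]

end PartialTrace

section NonAttacking

variable {α β γ : Type*}

def NonAttackingOn (g : α × β → γ) (S : Set (α × β)) : Prop :=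
  ∀ x ∈ S, ∀ y ∈ S, g x = g y → (x.1 = y.1 ∨ x.2 = y.2) → x = y

theorem NonAttackingOn.comp_swap {g : α × β → γ} {S : Set (α × β)} (h : NonAttackingOn g S) :
    NonAttackingOn (g ∘ Prod.swap) (Prod.swap ⁻¹' S) :=
  fun _ hx _ hy hxy hrc => Prod.swap_injective (h _ hx _ hy hxy hrc.symm)

variable [Fintype α] [Fintype β]

theorem exists_surjective_nonAttackingOn_univ_max [Nonempty α] [Nonempty β] :
    ∃ g : α × β → Fin (max (Fintype.card α) (Fintype.card β)),
      Function.Surjective g ∧ NonAttackingOn g Set.univ := by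
  set m := max (Fintype.card α) (Fintype.card β) with hm
  have : NeZero m := ⟨(Fintype.card_pos.trans_le (le_max_left _ _)).ne'⟩
  set i1 : α → Fin m := fun a => Fin.castLE (le_max_left _ _) (Fintype.equivFin α a)
  set i2 : β → Fin m := fun b => Fin.castLE (le_max_right _ _) (Fintype.equivFin β b)
  have hi1 : i1.Injective := (Fin.castLE_injective _).comp (Fintype.equivFin α).injective
  have hi2 : i2.Injective := (Fin.castLE_injective _).comp (Fintype.equivFin β).injective
  refine ⟨fun x => i1 x.1 + i2 x.2, ?_, ?_⟩
  · intro t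
    rcases max_choice (Fintype.card α) (Fintype.card β) with h | h
    · obtain ⟨a, ha⟩ := ((Fintype.bijective_iff_injective_and_card i1).2
        ⟨hi1, by simp [hm, h]⟩).2 (t - i2 (Classical.arbitrary β))
      exact ⟨(a, Classical.arbitrary β), by simp [ha]⟩
    · obtain ⟨b, hb⟩ := ((Fintype.bijective_iff_injective_and_card i2).2
        ⟨hi2, by simp [hm, h]⟩).2 (t - i1 (Classical.arbitrary α))
      exact ⟨(Classical.arbitrary α, b), by simp [hb]⟩
  · rintro ⟨a, b⟩ - ⟨a', b'⟩ - hab (h | h) <;> simp only at h hab <;> subst h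
    · rw [hi2 (add_left_cancel hab)]
    · rw [hi1 (add_right_cancel hab)]

theorem NonAttackingOn.exists_succ {n : ℕ} {g : α × β → Fin n} (hsurj : Function.Surjective g)
    (hg : NonAttackingOn g Set.univ) (hn : n < Fintype.card α * Fintype.card β) :
    ∃ g' : α × β → Fin (n + 1), Function.Surjective g' ∧ NonAttackingOn g' Set.univ := by
  classical
  obtain ⟨x, y, hxy, hgxy⟩ := Fintype.exists_ne_map_eq_of_card_lt g (by simpa using hn)
  refine ⟨fun z => if z = x then Fin.last n else (g z).castSucc, fun c => ?_, ?_⟩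
  · induction c using Fin.lastCases with
    | last => exact ⟨x, if_pos rfl⟩
    | cast c =>
      obtain ⟨z, rfl⟩ := hsurj c
      by_cases hz : z = x
      · exact ⟨y, by simp [hxy.symm, hz, hgxy]⟩
      · exact ⟨z, by simp [hz]⟩
  · intro a _ b _ hab hrc
    by_cases ha : a = x <;> by_cases hb : b = x
    · rw [ha, hb]
    · simp [ha, hb, (Fin.castSucc_lt_last _).ne'] at hab
    · simp [ha, hb, (Fin.castSucc_lt_last _).ne] at hab
    · simp only [ha, hb, if_false, Fin.castSucc_inj] at hab
      exact hg a trivial b trivial hab hrc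

theorem exists_surjective_nonAttackingOn_univ {k : ℕ}
    (h1 : max (Fintype.card α) (Fintype.card β) ≤ k) (h2 : k ≤ Fintype.card α * Fintype.card β) :
    ∃ g : α × β → Fin k, Function.Surjective g ∧ NonAttackingOn g Set.univ := by
  rcases isEmpty_or_nonempty (α × β) with hαβ | hαβ
  · obtain rfl : k = 0 := by simpa [← Fintype.card_prod] using h2
    exact ⟨isEmptyElim, fun c => c.elim0, fun x => isEmptyElim x⟩
  have : Nonempty α := hαβ.map Prod.fst
  have : Nonempty β := hαβ.map Prod.snd
  induction k, h1 using Nat.le_induction with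
  | base => exact exists_surjective_nonAttackingOn_univ_max
  | succ n _ ih =>
    obtain ⟨g, hsurj, hg⟩ := ih (by omega)
    exact hg.exists_succ hsurj (by omega)

end NonAttacking

theorem exists_nonAttackingOn_product {α β : Type*} (s : Finset α) (t : Finset β) {k : ℕ}
    (hk : 0 < k) (h1 : max #s #t ≤ k) (h2 : k ≤ #s * #t) :
    ∃ f : α × β → Fin k, (∀ c, ∃ x ∈ s ×ˢ t, f x = c) ∧ NonAttackingOn f ↑(s ×ˢ t) := by
  classical
  obtain ⟨g, hsurj, hg⟩ := exists_surjective_nonAttackingOn_univ (α := s) (β := t) (k := k)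
    (by simpa using h1) (by simpa using h2)
  set f : α × β → Fin k := fun x =>
    if h : x.1 ∈ s ∧ x.2 ∈ t then g (⟨x.1, h.1⟩, ⟨x.2, h.2⟩) else ⟨0, hk⟩
  have hf : ∀ (a : s) (b : t), f (a, b) = g (a, b) := fun a b => dif_pos ⟨a.2, b.2⟩
  refine ⟨f, fun c => ?_, ?_⟩
  · obtain ⟨⟨a, b⟩, rfl⟩ := hsurj c
    exact ⟨(a, b), mem_product.2 ⟨a.2, b.2⟩, hf a b⟩
  · rintro ⟨a, b⟩ hx ⟨a', b'⟩ hy hxy hrc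
    simp only [coe_product, Set.mem_prod, mem_coe] at hx hy
    have := hg (⟨a, hx.1⟩, ⟨b, hx.2⟩) trivial (⟨a', hy.1⟩, ⟨b', hy.2⟩) trivial
      (by rwa [← hf, ← hf]) (by simpa [Subtype.ext_iff] using hrc)
    simpa [Subtype.ext_iff] using this

section FiberMatrix

variable {α τ : Type*} [DecidableEq τ]

def fiberMatrix (f : α → τ) (w : α → ℝ) : Matrix α τ ℂ :=
  of fun x t => if f x = t then (w x : ℂ) else 0

theorem fiberMatrix_mul_conjTranspose_apply [Fintype τ] (f : α → τ) (w : α → ℝ) (x y : α) :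
    (fiberMatrix f w * (fiberMatrix f w)ᴴ) x y = if f x = f y then (w x * w y : ℂ) else 0 := by
  rw [mul_apply, Fintype.sum_eq_single (f x) fun t ht => by simp [fiberMatrix, Ne.symm ht]]
  simp [fiberMatrix, eq_comm, apply_ite (star : ℂ → ℂ)]

theorem conjTranspose_fiberMatrix_mul [Fintype α] (f : α → τ) (w : α → ℝ) :
    (fiberMatrix f w)ᴴ * fiberMatrix f w =
      diagonal fun t => ((∑ x with f x = t, w x ^ 2 : ℝ) : ℂ) := by
  ext s t
  rw [mul_apply, diagonal_apply]
  split_ifs with hst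
  · subst hst
    simp [fiberMatrix, sum_filter, sq, ← ite_and, apply_ite (star : ℂ → ℂ),
      apply_ite Complex.ofReal]
  · refine sum_eq_zero fun x _ => ?_
    by_cases hs : f x = s <;> simp [fiberMatrix, hs, hst]

theorem rank_fiberMatrix [Fintype α] [Fintype τ] {f : α → τ} {w : α → ℝ}
    (hw : ∀ t, ∃ x, f x = t ∧ w x ≠ 0) : (fiberMatrix f w).rank = Fintype.card τ := by
  have hpos : ∀ t, ((∑ x with f x = t, w x ^ 2 : ℝ) : ℂ) ≠ 0 := fun t => by
    obtain ⟨x, hx, hwx⟩ := hw t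
    exact Complex.ofReal_ne_zero.2 (sum_pos' (fun y _ => sq_nonneg (w y))
      ⟨x, mem_filter.2 ⟨mem_univ x, hx⟩, by positivity⟩).ne'
  rw [← rank_conjTranspose_mul_self, conjTranspose_fiberMatrix_mul, rank_diagonal,
    Fintype.card_congr (Equiv.subtypeUnivEquiv hpos)]

end FiberMatrix

section Coupling

variable {n1 n2 : ℕ} {τ : Type*} [Fintype τ] [DecidableEq τ]

theorem trace2_fiberMatrix_mul_conjTranspose {f : Fin n1 × Fin n2 → τ}
    {w : Fin n1 × Fin n2 → ℝ} (hf : NonAttackingOn f {x | w x ≠ 0}) :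
    trace2 (fiberMatrix f w * (fiberMatrix f w)ᴴ) =
      diagonal fun i => ((∑ j, w (i, j) ^ 2 : ℝ) : ℂ) := by
  ext i i'
  simp only [trace2, of_apply, fiberMatrix_mul_conjTranspose_apply, diagonal_apply]
  split_ifs with hii
  · subst hii
    push_cast
    simp [sq]
  · refine sum_eq_zero fun j _ => ?_
    split_ifs with hfj
    · by_contra hw
      obtain ⟨hw1, hw2⟩ := mul_ne_zero_iff.1 hw
      exact hii (congrArg Prod.fst (hf (i, j) (by simpa using hw1) (i', j) (by simpa using hw2)
        hfj (Or.inr rfl)))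
    · rfl

theorem trace1_fiberMatrix_mul_conjTranspose {f : Fin n1 × Fin n2 → τ}
    {w : Fin n1 × Fin n2 → ℝ} (hf : NonAttackingOn f {x | w x ≠ 0}) :
    trace1 (fiberMatrix f w * (fiberMatrix f w)ᴴ) =
      diagonal fun j => ((∑ i, w (i, j) ^ 2 : ℝ) : ℂ) := by
  have hswap : (fiberMatrix f w * (fiberMatrix f w)ᴴ).submatrix Prod.swap Prod.swap =
      fiberMatrix (f ∘ Prod.swap) (w ∘ Prod.swap) *
        (fiberMatrix (f ∘ Prod.swap) (w ∘ Prod.swap))ᴴ := by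
    ext x y
    simp [fiberMatrix_mul_conjTranspose_apply]
  rw [trace1_eq_trace2_submatrix_swap, hswap]
  exact trace2_fiberMatrix_mul_conjTranspose hf.comp_swap

theorem exists_coupling_diagonal {p : Fin n1 → ℝ} {q : Fin n2 → ℝ}
    (hp : ∀ i, 0 ≤ p i) (hq : ∀ j, 0 ≤ q j) (hp1 : ∑ i, p i = 1) (hq1 : ∑ j, q j = 1) {k : ℕ}
    (h1 : max #{i | p i ≠ 0} #{j | q j ≠ 0} ≤ k) (h2 : k ≤ #{i | p i ≠ 0} * #{j | q j ≠ 0}) :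
    ∃ A : Matrix (Fin n1 × Fin n2) (Fin k) ℂ,
      trace2 (A * Aᴴ) = diagonal (fun i => (p i : ℂ)) ∧
        trace1 (A * Aᴴ) = diagonal (fun j => (q j : ℂ)) ∧ A.rank = k := by
  have hk : 0 < k := by
    obtain ⟨i, -, hi⟩ := exists_ne_zero_of_sum_ne_zero (hp1.trans_ne one_ne_zero)
    exact (card_pos.2 ⟨i, mem_filter.2 ⟨mem_univ i, hi⟩⟩).trans_le ((le_max_left _ _).trans h1)
  obtain ⟨f, hsurj, hf⟩ := exists_nonAttackingOn_product _ _ hk h1 h2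
  set w : Fin n1 × Fin n2 → ℝ := fun x => √(p x.1) * √(q x.2)
  have hw : ∀ x, w x ≠ 0 ↔ x ∈ ({i | p i ≠ 0} : Finset _) ×ˢ ({j | q j ≠ 0} : Finset _) := by
    simp [w, Real.sqrt_eq_zero, hp, hq]
  have hw2 : ∀ i j, w (i, j) ^ 2 = p i * q j := fun i j => by
    simp [w, mul_pow, Real.sq_sqrt, hp, hq]
  have hfw : NonAttackingOn f {x | w x ≠ 0} := by
    rwa [show {x | w x ≠ 0} = _ from Set.ext hw]
  refine ⟨fiberMatrix f w, ?_, ?_, (rank_fiberMatrix fun t => ?_).trans (Fintype.card_fin k)⟩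
  · rw [trace2_fiberMatrix_mul_conjTranspose hfw]
    simp [hw2, ← mul_sum, hq1]
  · rw [trace1_fiberMatrix_mul_conjTranspose hfw]
    simp [hw2, ← sum_mul, hp1]
  · obtain ⟨x, hx, rfl⟩ := hsurj t
    exact ⟨x, rfl, (hw x).2 hx⟩

end Coupling

theorem Matrix.rank_mul_eq_right_of_mul_eq_one {R m n o : Type*} [CommSemiring R]
    [StrongRankCondition R] [Fintype m] [Fintype n] [DecidableEq n] [Fintype o] {W : Matrix m n R}
    {W' : Matrix n m R} (h : W' * W = 1) (A : Matrix n o R) : (W * A).rank = A.rank :=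
  le_antisymm (rank_mul_le_right W A) <| by
    simpa only [← Matrix.mul_assoc, h, Matrix.one_mul] using rank_mul_le_right W' (W * A)

theorem Matrix.PosSemidef.exists_eq_mul_diagonal_mul_conjTranspose {𝕜 n : Type*} [RCLike 𝕜]
    [Fintype n] [DecidableEq n] {ρ : Matrix n n 𝕜} (hρ : ρ.PosSemidef) :
    ∃ U : Matrix n n 𝕜, Uᴴ * U = 1 ∧ ∃ p : n → ℝ, (∀ i, 0 ≤ p i) ∧ ((∑ i, p i : ℝ) : 𝕜) = ρ.trace ∧
      #{i | p i ≠ 0} = ρ.rank ∧ ρ = U * diagonal (fun i => (p i : 𝕜)) * Uᴴ := by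
  refine ⟨hρ.1.eigenvectorUnitary, ?_, hρ.1.eigenvalues, hρ.eigenvalues_nonneg,
    by rw [hρ.1.trace_eq_sum_eigenvalues, RCLike.ofReal_sum], ?_, ?_⟩
  · rw [← star_eq_conjTranspose]
    exact mem_unitaryGroup_iff'.1 hρ.1.eigenvectorUnitary.2
  · rw [hρ.1.rank_eq_card_non_zero_eigs, Fintype.card_subtype]
  · conv_lhs => rw [hρ.1.spectral_theorem, Unitary.conjStarAlgAut_apply, star_eq_conjTranspose]
    rfl

/-- For any `k` with `max{rank ρ1, rank ρ2} ≤ k ≤ rank ρ1 · rank ρ2` there is a state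
in `S(ρ1, ρ2)` of rank exactly `k`. -/
theorem stmt5 {n1 n2 : ℕ}
    (ρ1 : Matrix (Fin n1) (Fin n1) ℂ) (ρ2 : Matrix (Fin n2) (Fin n2) ℂ)
    (hρ1 : ρ1.PosSemidef) (hρ1tr : ρ1.trace = 1)
    (hρ2 : ρ2.PosSemidef) (hρ2tr : ρ2.trace = 1)
    (k : ℕ) (hk1 : max ρ1.rank ρ2.rank ≤ k) (hk2 : k ≤ ρ1.rank * ρ2.rank) :
    ∃ ρ : Matrix (Fin n1 × Fin n2) (Fin n1 × Fin n2) ℂ,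
      ρ.PosSemidef ∧ ρ.trace = 1 ∧ trace2 ρ = ρ1 ∧ trace1 ρ = ρ2 ∧ ρ.rank = k := by
  obtain ⟨U, hU, p, hp, hptr, hprank, hρ1eq⟩ := hρ1.exists_eq_mul_diagonal_mul_conjTranspose
  obtain ⟨V, hV, q, hq, hqtr, hqrank, hρ2eq⟩ := hρ2.exists_eq_mul_diagonal_mul_conjTranspose
  obtain ⟨A, hA2, hA1, hArank⟩ := exists_coupling_diagonal (k := k) hp hq
    (RCLike.ofReal_inj (K := ℂ) |>.1 <| by rw [hptr, hρ1tr, RCLike.ofReal_one])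
    (RCLike.ofReal_inj (K := ℂ) |>.1 <| by rw [hqtr, hρ2tr, RCLike.ofReal_one])
    (by rwa [hprank, hqrank]) (by rwa [hprank, hqrank])
  set W := U ⊗ₖ V
  have hW : Wᴴ * W = 1 := by
    rw [conjTranspose_kronecker, ← mul_kronecker_mul, hU, hV, one_kronecker_one]
  have hconj : (W * A) * (W * A)ᴴ = W * (A * Aᴴ) * Wᴴ := by
    simp only [conjTranspose_mul, Matrix.mul_assoc]
  have htr2 : trace2 ((W * A) * (W * A)ᴴ) = ρ1 := by
    rw [hconj, trace2_kronecker_mul_mul U hV, hA2]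
    exact hρ1eq.symm
  have htr1 : trace1 ((W * A) * (W * A)ᴴ) = ρ2 := by
    rw [hconj, trace1_kronecker_mul_mul hU, hA1]
    exact hρ2eq.symm
  refine ⟨(W * A) * (W * A)ᴴ, posSemidef_self_mul_conjTranspose _,
    by rw [← trace_trace2, htr2, hρ1tr], htr2, htr1, ?_⟩
  rw [rank_self_mul_conjTranspose, rank_mul_eq_right_of_mul_eq_one hW, hArank]
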